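/- There exists ε₀ > 0 such that for all ε with 0 < ε < ε₀, the polynomial function f(x,y,z) = x³ − 3x + y³ − 3y + z³ − 3ε(1 + x + y)z has exactly six critical points in ℝ³, all of them nondegenerate, with exactly one of Morse index 0, exactly three of Morse index 1, exactly two of Morse index 2, and none of Morse index 3. -/

import Mathlib

open MvPolynomial Matrix

/-- The Hessian matrix of a polynomial in three real variables at a point. -/
noncomputable def hess3 (f : MvPolynomial (Fin 3) ℝ) (p : Fin 3 → ℝ) :
    Matrix (Fin 3) (Fin 3) ℝ :=
  Matrix.of fun i j => eval p (pderiv i (pderiv j f))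

/-- A point of ℝ³ is a critical point of a polynomial in three variables if all three
partial derivatives vanish there. -/
def IsCriticalPt3 (f : MvPolynomial (Fin 3) ℝ) (p : Fin 3 → ℝ) : Prop :=
  ∀ i, eval p (pderiv i f) = 0

/-- The Morse index at a point: the number of negative eigenvalues (with multiplicity)
of the Hessian matrix there (junk value 0 if the Hessian is not symmetric). -/
noncomputable def morseIndex3 (f : MvPolynomial (Fin 3) ℝ) (p : Fin 3 → ℝ) : ℕ :=
  if h : (hess3 f p).IsHermitian then {i : Fin 3 | h.eigenvalues i < 0}.ncard else 0

/-- The polynomial f(x,y,z) = x³ − 3x + y³ − 3y + z³ − 3ε(1 + x + y)z. -/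
noncomputable def fSix (ε : ℝ) : MvPolynomial (Fin 3) ℝ :=
  X 0 ^ 3 - C 3 * X 0 + X 1 ^ 3 - C 3 * X 1 + X 2 ^ 3
    - C (3 * ε) * (1 + X 0 + X 1) * X 2

/-! ### Auxiliary lemmas -/

lemma pderiv_three (i : Fin 3) : pderiv i (3 : MvPolynomial (Fin 3) ℝ) = 0 := by
  have : (3 : MvPolynomial (Fin 3) ℝ) = C 3 := (map_ofNat C 3).symm
  rw [this, pderiv_C]

lemma hess3_fSix (ε : ℝ) (p : Fin 3 → ℝ) :
    hess3 (fSix ε) p =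
      !![6 * p 0, 0, -(3*ε); 0, 6 * p 1, -(3*ε); -(3*ε), -(3*ε), 6 * p 2] := by
  ext i j
  fin_cases i <;> fin_cases j <;>
    simp [hess3, fSix, pderiv_mul, pderiv_pow, pderiv_X, pderiv_three, Pi.single_apply] <;> ring

lemma crit_iff (ε : ℝ) (p : Fin 3 → ℝ) :
    IsCriticalPt3 (fSix ε) p ↔
      (p 0)^2 = 1 + ε * p 2 ∧ (p 1)^2 = 1 + ε * p 2 ∧
        (p 2)^2 = ε * (1 + p 0 + p 1) := by
  constructor
  · intro h
    have h0 := h 0; have h1 := h 1; have h2 := h 2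
    simp [fSix, pderiv_mul, pderiv_pow, pderiv_X, pderiv_three, Pi.single_apply] at h0 h1 h2
    refine ⟨by nlinarith, by nlinarith, by nlinarith⟩
  · rintro ⟨h0, h1, h2⟩ i
    fin_cases i <;>
      simp [fSix, pderiv_mul, pderiv_pow, pderiv_X, pderiv_three, Pi.single_apply] <;> nlinarith

lemma hess3_herm (ε : ℝ) (p : Fin 3 → ℝ) : (hess3 (fSix ε) p).IsHermitian := by
  rw [hess3_fSix, Matrix.IsHermitian]
  ext i j
  fin_cases i <;> fin_cases j <;> simp

lemma trace_eq_sum_eig {A : Matrix (Fin 3) (Fin 3) ℝ} (hA : A.IsHermitian) :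
    A.trace = hA.eigenvalues 0 + hA.eigenvalues 1 + hA.eigenvalues 2 := by
  rw [hA.trace_eq_sum_eigenvalues]
  simp [Fin.sum_univ_three]

lemma det_eq_prod_eig {A : Matrix (Fin 3) (Fin 3) ℝ} (hA : A.IsHermitian) :
    A.det = hA.eigenvalues 0 * hA.eigenvalues 1 * hA.eigenvalues 2 := by
  rw [hA.det_eq_prod_eigenvalues]
  simp [Fin.prod_univ_three]

lemma ncard_fin3_zero {f : Fin 3 → ℝ} (h : ∀ i, 0 < f i) : {i : Fin 3 | f i < 0}.ncard = 0 := by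
  have : {i : Fin 3 | f i < 0} = ∅ := by
    ext i; simp [not_lt.mpr (h i).le]
  simp [this]

lemma ncard_eig_one {f : Fin 3 → ℝ} (hprod : f 0 * f 1 * f 2 < 0)
    (hsum : 0 < f 0 + f 1 + f 2) : {i : Fin 3 | f i < 0}.ncard = 1 := by
  rcases lt_or_ge (f 0) 0 with h0 | h0 <;> rcases lt_or_ge (f 1) 0 with h1 | h1 <;>
    rcases lt_or_ge (f 2) 0 with h2 | h2
  · exfalso; linarith
  · exfalso; nlinarith [mul_nonneg (mul_pos_of_neg_of_neg h0 h1).le h2]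
  · exfalso
    nlinarith [mul_nonneg (mul_nonneg (neg_nonneg.2 h0.le) h1) (neg_nonneg.2 h2.le)]
  · have : {i : Fin 3 | f i < 0} = {0} := by
      ext i; fin_cases i <;> simp [h0, not_lt.mpr h1, not_lt.mpr h2]
    simp [this]
  · exfalso
    nlinarith [mul_nonneg (mul_nonneg h0 (neg_nonneg.2 h1.le)) (neg_nonneg.2 h2.le)]
  · have : {i : Fin 3 | f i < 0} = {1} := by
      ext i; fin_cases i <;> simp [not_lt.mpr h0, h1, not_lt.mpr h2]
    simp [this]
  · have : {i : Fin 3 | f i < 0} = {2} := by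
      ext i; fin_cases i <;> simp [not_lt.mpr h0, not_lt.mpr h1, h2]
    simp [this]
  · exfalso; nlinarith [mul_nonneg (mul_nonneg h0 h1) h2]

lemma ncard_eig_two {f : Fin 3 → ℝ} (hprod : 0 < f 0 * f 1 * f 2)
    (hsum : f 0 + f 1 + f 2 < 0) : {i : Fin 3 | f i < 0}.ncard = 2 := by
  rcases lt_or_ge (f 0) 0 with h0 | h0 <;> rcases lt_or_ge (f 1) 0 with h1 | h1 <;>
    rcases lt_or_ge (f 2) 0 with h2 | h2
  · exfalso
    nlinarith [mul_pos (mul_pos_of_neg_of_neg h0 h1) (neg_pos.2 h2)]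
  · have : {i : Fin 3 | f i < 0} = {0, 1} := by
      ext i; fin_cases i <;> simp [h0, h1, not_lt.mpr h2]
    rw [this, Set.ncard_pair (by decide)]
  · have : {i : Fin 3 | f i < 0} = {0, 2} := by
      ext i; fin_cases i <;> simp [h0, not_lt.mpr h1, h2]
    rw [this, Set.ncard_pair (by decide)]
  · exfalso
    nlinarith [mul_nonneg (mul_nonneg (neg_nonneg.2 h0.le) h1) h2]
  · have : {i : Fin 3 | f i < 0} = {1, 2} := by
      ext i; fin_cases i <;> simp [not_lt.mpr h0, h1, h2]
    rw [this, Set.ncard_pair (by decide)]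
  · exfalso
    nlinarith [mul_nonneg (mul_nonneg h0 (neg_nonneg.2 h1.le)) h2]
  · exfalso
    nlinarith [mul_nonneg (mul_nonneg h0 h1) (neg_nonneg.2 h2.le)]
  · exfalso; linarith

lemma hess3_det (ε : ℝ) (p : Fin 3 → ℝ) :
    (hess3 (fSix ε) p).det =
      216 * (p 0 * p 1 * p 2) - 54 * ε^2 * (p 0 + p 1) := by
  rw [hess3_fSix, Matrix.det_fin_three]
  simp [Matrix.cons_val_zero, Matrix.cons_val_one]
  ring

lemma hess3_trace (ε : ℝ) (p : Fin 3 → ℝ) :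
    (hess3 (fSix ε) p).trace = 6 * (p 0 + p 1 + p 2) := by
  rw [hess3_fSix, Matrix.trace_fin_three]
  simp
  ring

lemma morse_eq_one {ε : ℝ} {p : Fin 3 → ℝ} (hdet : (hess3 (fSix ε) p).det < 0)
    (htr : 0 < (hess3 (fSix ε) p).trace) : morseIndex3 (fSix ε) p = 1 := by
  rw [morseIndex3, dif_pos (hess3_herm ε p)]
  exact ncard_eig_one (by rw [← det_eq_prod_eig (hess3_herm ε p)]; exact hdet)
    (by rw [← trace_eq_sum_eig (hess3_herm ε p)]; exact htr)

lemma morse_eq_two {ε : ℝ} {p : Fin 3 → ℝ} (hdet : 0 < (hess3 (fSix ε) p).det)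
    (htr : (hess3 (fSix ε) p).trace < 0) : morseIndex3 (fSix ε) p = 2 := by
  rw [morseIndex3, dif_pos (hess3_herm ε p)]
  exact ncard_eig_two (by rw [← det_eq_prod_eig (hess3_herm ε p)]; exact hdet)
    (by rw [← trace_eq_sum_eig (hess3_herm ε p)]; exact htr)

lemma morse_eq_zero {ε : ℝ} {p : Fin 3 → ℝ} (hpd : (hess3 (fSix ε) p).PosDef) :
    morseIndex3 (fSix ε) p = 0 := by
  rw [morseIndex3, dif_pos (hess3_herm ε p)]
  exact ncard_fin3_zero fun i => hpd.eigenvalues_pos i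

lemma hess3_posdef {ε s : ℝ} {p : Fin 3 → ℝ} (hs : 0 < s) (hs2 : s^2 = ε) (hsle : s ≤ 1/2)
    (hx : 9/10 ≤ p 0) (hy : 9/10 ≤ p 1) (hz : s ≤ p 2) : (hess3 (fSix ε) p).PosDef := by
  rw [hess3_fSix]
  rw [posDef_iff_dotProduct_mulVec]
  constructor
  · rw [Matrix.IsHermitian]; ext i j; fin_cases i <;> fin_cases j <;> simp
  · intro v hv
    have hne : v 0 ≠ 0 ∨ v 1 ≠ 0 ∨ v 2 ≠ 0 := by
      by_contra h
      push_neg at h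
      exact hv (by funext i; fin_cases i <;> simp [h.1, h.2.1, h.2.2])
    have hpos : 0 < (v 0)^2 + (v 1)^2 + (v 2)^2 := by
      rcases hne with h | h | h
      · positivity
      · positivity
      · positivity
    simp only [dotProduct, Matrix.mulVec, Fin.sum_univ_three, star]
    simp [Fin.sum_univ_three]
    subst hs2
    have hcube : s^3 ≤ 1/8 := by
      calc s^3 ≤ (1/2)^3 := pow_le_pow_left₀ hs.le hsle 3
      _ = 1/8 := by norm_num
    nlinarith [mul_nonneg hs.le (sq_nonneg (s * (v 0 + v 1) - v 2)), sq_nonneg (v 0),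
      sq_nonneg (v 1), sq_nonneg (v 2),
      mul_nonneg (sub_nonneg.2 hz) (sq_nonneg (v 2)),
      mul_nonneg (by nlinarith : (0:ℝ) ≤ 1/8 - s^3) (sq_nonneg (v 0 + v 1)),
      mul_nonneg hs.le (sq_nonneg (v 2)),
      mul_nonneg (by linarith : (0:ℝ) ≤ p 0 - 9/10) (sq_nonneg (v 0)),
      mul_nonneg (by linarith : (0:ℝ) ≤ p 1 - 9/10) (sq_nonneg (v 1)),
      sq_nonneg (v 0 - v 1), sq_nonneg (v 0 + v 1),
      mul_pos hs hpos,
      mul_nonneg (by linarith : (0:ℝ) ≤ 1/2 - s)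
        (by positivity : (0:ℝ) ≤ (v 0)^2 + (v 1)^2)]

noncomputable def qf (ε : ℝ) : ℝ → ℝ := fun x => (x^2 - 1)^2 - ε^3 * (1 + 2*x)

variable {ε : ℝ}

lemma qf_hasDeriv (x : ℝ) :
    HasDerivAt (qf ε) (2*(x^2-1)*(2*x) - ε^3*2) x := by
  have h1 : HasDerivAt (fun x : ℝ => (x^2 - 1)^2) (2*(x^2-1)^1*(2*x)) x := by
    have := ((hasDerivAt_pow 2 x).sub_const 1).pow 2
    simpa [Pi.pow_def] using this
  have h2 : HasDerivAt (fun x : ℝ => ε^3 * (1 + 2*x)) (ε^3 * 2) x := by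
    have : HasDerivAt (fun x : ℝ => 1 + 2*x) 2 x := by
      simpa using ((hasDerivAt_id x).const_mul 2).const_add 1
    simpa using this.const_mul (ε^3)
  have h3 := h1.sub h2; rw [pow_one] at h3; exact h3

lemma qf_cont : Continuous (qf ε) := by
  unfold qf; continuity

lemma qf_low (hε : 0 < ε) (hε1 : ε < 1/100) {x : ℝ} (hx : x ≤ 9/10) : 0 < qf ε x := by
  have hε3 : ε^3 < 1/1000000 := by nlinarith [pow_lt_pow_left₀ hε1 hε.le (by norm_num : (3:ℕ) ≠ 0), sq_nonneg ε, mul_pos hε hε]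
  have hε3p : 0 < ε^3 := by positivity
  unfold qf
  rcases le_or_gt x (-1/2) with h | h
  · nlinarith [sq_nonneg (x+1), sq_nonneg (x-1), sq_nonneg ((x+1)*(x-1)), sq_nonneg (x^2-1),
      mul_nonneg (mul_nonneg hε3p.le hε3p.le) (sq_nonneg (x+1)),
      sq_nonneg ((3/2)*(x+1) - (2/3)*ε^3)]
  · have hx2 : x^2 ≤ 81/100 := by nlinarith
    nlinarith [sq_nonneg (x^2-1)]

lemma qf_high (hε : 0 < ε) (hε1 : ε < 1/100) {x : ℝ} (hx : 11/10 ≤ x) : 0 < qf ε x := by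
  have hε3 : ε^3 < 1/1000000 := by nlinarith [pow_lt_pow_left₀ hε1 hε.le (by norm_num : (3:ℕ) ≠ 0), sq_nonneg ε, mul_pos hε hε]
  have hx2 : 121/100 ≤ x^2 := by nlinarith
  unfold qf
  nlinarith [mul_nonneg (by nlinarith : (0:ℝ) ≤ x^2 - 121/100) (by nlinarith : (0:ℝ) ≤ x^2 - 1),
    sq_nonneg (x^2-1), mul_nonneg (by positivity : (0:ℝ) ≤ ε^3) (by nlinarith : (0:ℝ) ≤ x - 11/10)]

lemma qf_one (hε : 0 < ε) : qf ε 1 < 0 := by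
  unfold qf; nlinarith [pow_pos hε 3]

lemma qf_mid (hε : 0 < ε) (hε1 : ε < 1/100) {x : ℝ} (h1 : 1 ≤ x) (h2 : x ≤ 1 + ε^3) :
    qf ε x < 0 := by
  have hε3 : ε^3 < 1/1000000 := by nlinarith [pow_lt_pow_left₀ hε1 hε.le (by norm_num : (3:ℕ) ≠ 0), sq_nonneg ε, mul_pos hε hε]
  have hε3p : 0 < ε^3 := by positivity
  have hxu : x^2 - 1 ≤ 3*ε^3 := by nlinarith
  have hxl : 0 ≤ x^2 - 1 := by nlinarith
  unfold qf
  nlinarith [sq_nonneg (x^2-1)]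

lemma qf_anti (hε : 0 < ε) (hε1 : ε < 1/100) :
    StrictAntiOn (qf ε) (Set.Icc (9/10) 1) := by
  apply strictAntiOn_of_deriv_neg (convex_Icc _ _) qf_cont.continuousOn
  intro x hx
  rw [interior_Icc] at hx
  rw [(qf_hasDeriv x).deriv]
  have hε3p : 0 < ε^3 := by positivity
  nlinarith [hx.1, hx.2]

lemma qf_mono (hε : 0 < ε) (hε1 : ε < 1/100) :
    StrictMonoOn (qf ε) (Set.Icc (1 + ε^3) (11/10)) := by
  apply strictMonoOn_of_deriv_pos (convex_Icc _ _) qf_cont.continuousOn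
  intro x hx
  rw [interior_Icc] at hx
  rw [(qf_hasDeriv x).deriv]
  have hε3p : 0 < ε^3 := by positivity
  have h1 : 1 + ε^3 < x := hx.1
  have hx2 : x^2 - 1 ≥ 2*ε^3 := by nlinarith
  nlinarith

lemma qf_roots (hε : 0 < ε) (hε1 : ε < 1/100) :
    ∃ xm ∈ Set.Ioo (9/10:ℝ) 1, ∃ xp ∈ Set.Ioo (1 + ε^3) (11/10:ℝ),
      qf ε xm = 0 ∧ qf ε xp = 0 ∧ ∀ x, qf ε x = 0 → x = xm ∨ x = xp := by
  have hε3 : ε^3 < 1/1000000 := by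
    nlinarith [pow_lt_pow_left₀ hε1 hε.le (by norm_num : (3:ℕ) ≠ 0), sq_nonneg ε, mul_pos hε hε]
  have hε3p : 0 < ε^3 := by positivity
  have h1 : (0:ℝ) ∈ Set.Ioo (qf ε 1) (qf ε (9/10)) :=
    ⟨qf_one hε, qf_low hε hε1 le_rfl⟩
  have hm := intermediate_value_Ioo' (by norm_num : (9/10:ℝ) ≤ 1) qf_cont.continuousOn h1
  obtain ⟨xm, hxm, hxm0⟩ := hm
  have h2 : (0:ℝ) ∈ Set.Ioo (qf ε (1 + ε^3)) (qf ε (11/10)) :=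
    ⟨qf_mid hε hε1 (by linarith) le_rfl, qf_high hε hε1 le_rfl⟩
  have hp := intermediate_value_Ioo (by linarith : (1 + ε^3:ℝ) ≤ 11/10) qf_cont.continuousOn h2
  obtain ⟨xp, hxp, hxp0⟩ := hp
  refine ⟨xm, hxm, xp, hxp, hxm0, hxp0, ?_⟩
  intro x hx
  rcases le_or_gt x (9/10) with h | h
  · exact absurd hx (by have := qf_low hε hε1 h; linarith)
  rcases le_or_gt x 1 with h' | h'
  · left
    exact (qf_anti hε hε1).injOn (Set.mem_Icc.2 ⟨h.le, h'⟩)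
      (Set.mem_Icc.2 ⟨hxm.1.le, hxm.2.le⟩) (by rw [hx, hxm0])
  rcases le_or_gt x (1 + ε^3) with h'' | h''
  · exact absurd hx (by have := qf_mid hε hε1 h'.le h''; linarith)
  rcases le_or_gt x (11/10) with h''' | h'''
  · right
    exact (qf_mono hε hε1).injOn (Set.mem_Icc.2 ⟨h''.le, h'''⟩)
      (Set.mem_Icc.2 ⟨hxp.1.le, hxp.2.le⟩) (by rw [hx, hxp0])
  · exact absurd hx (by have := qf_high hε hε1 h'''.le; linarith)

lemma crit_typeA {ε s c : ℝ} (hs2 : s^2 = ε) (hc2 : c^2 = 1 + ε*s) :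
    IsCriticalPt3 (fSix ε) ![c, -c, s] := by
  rw [crit_iff]
  refine ⟨by simpa using hc2, by simpa using hc2, ?_⟩
  simp
  nlinarith

lemma crit_typeB {ε x z : ℝ} (hε : ε ≠ 0) (hez : ε * z = x^2 - 1) (hz2 : z^2 = ε*(1+2*x)) :
    IsCriticalPt3 (fSix ε) ![x, x, z] := by
  rw [crit_iff]
  refine ⟨?_, ?_, ?_⟩ <;> simp <;> nlinarith

lemma sq_pos_ne {c : ℝ} (hc : c ≠ 0) : 0 < c^2 :=
  (sq_nonneg c).lt_of_ne' (pow_ne_zero 2 hc)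

lemma morse_typeA_pos {ε s c : ℝ} (hs : 0 < s) (hc : c ≠ 0) :
    morseIndex3 (fSix ε) ![c, -c, s] = 1 ∧ (hess3 (fSix ε) ![c, -c, s]).det ≠ 0 := by
  have hdet : (hess3 (fSix ε) ![c, -c, s]).det < 0 := by
    rw [hess3_det]
    simp
    nlinarith [sq_pos_ne hc, mul_pos (sq_pos_ne hc) hs]
  have htr : 0 < (hess3 (fSix ε) ![c, -c, s]).trace := by
    rw [hess3_trace]; simp; nlinarith
  exact ⟨morse_eq_one hdet htr, hdet.ne⟩

lemma morse_typeA_neg {ε s c : ℝ} (hs : s < 0) (hc : c ≠ 0) :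
    morseIndex3 (fSix ε) ![c, -c, s] = 2 ∧ (hess3 (fSix ε) ![c, -c, s]).det ≠ 0 := by
  have hdet : 0 < (hess3 (fSix ε) ![c, -c, s]).det := by
    rw [hess3_det]
    simp
    nlinarith [sq_pos_ne hc, mul_pos (sq_pos_ne hc) (neg_pos.2 hs)]
  have htr : (hess3 (fSix ε) ![c, -c, s]).trace < 0 := by
    rw [hess3_trace]; simp; nlinarith
  exact ⟨morse_eq_two hdet htr, hdet.ne'⟩

lemma le_neg_of_sq {z s : ℝ} (hs : 0 < s) (hz : z < 0) (h : s^2 ≤ z^2) : z ≤ -s := by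
  nlinarith
lemma ge_of_sq {z s : ℝ} (hs : 0 < s) (hz : 0 < z) (h : s^2 ≤ z^2) : s ≤ z := by
  nlinarith
lemma ge_neg_of_sq {z c : ℝ} (hc : 0 < c) (h : z^2 ≤ c^2) : -c ≤ z := by
  nlinarith [sq_nonneg (z + c)]
lemma le_of_sq {z c : ℝ} (hc : 0 < c) (h : z^2 ≤ c^2) : z ≤ c := by
  nlinarith [sq_nonneg (z - c)]
lemma sq_lt_one_of {x : ℝ} (h0 : 0 ≤ x) (h1 : x < 1) : x^2 < 1 := by nlinarith
lemma one_lt_sq_of {x : ℝ} (h1 : 1 < x) : 1 < x^2 := by nlinarith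
set_option maxHeartbeats 4000000 in
/-- There is ε₀ > 0 such that for 0 < ε < ε₀ the polynomial
x³ − 3x + y³ − 3y + z³ − 3ε(1 + x + y)z has exactly six critical points, all
nondegenerate, with exactly one of Morse index 0, three of index 1, two of index 2
and none of index 3. -/
theorem fSix_six_critical_points :
    ∃ ε₀ : ℝ, 0 < ε₀ ∧ ∀ ε : ℝ, 0 < ε → ε < ε₀ →
      {p : Fin 3 → ℝ | IsCriticalPt3 (fSix ε) p}.ncard = 6 ∧
      (∀ p : Fin 3 → ℝ, IsCriticalPt3 (fSix ε) p → (hess3 (fSix ε) p).det ≠ 0) ∧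
      {p : Fin 3 → ℝ | IsCriticalPt3 (fSix ε) p ∧ morseIndex3 (fSix ε) p = 0}.ncard = 1 ∧
      {p : Fin 3 → ℝ | IsCriticalPt3 (fSix ε) p ∧ morseIndex3 (fSix ε) p = 1}.ncard = 3 ∧
      {p : Fin 3 → ℝ | IsCriticalPt3 (fSix ε) p ∧ morseIndex3 (fSix ε) p = 2}.ncard = 2 ∧
      {p : Fin 3 → ℝ | IsCriticalPt3 (fSix ε) p ∧ morseIndex3 (fSix ε) p = 3} = ∅ := by
  refine ⟨1/100, by norm_num, ?_⟩
  intro ε hε hε1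
  have hεne : ε ≠ 0 := hε.ne'
  obtain ⟨s, hsdef⟩ : ∃ x : ℝ, x = Real.sqrt ε := ⟨_, rfl⟩
  have hs0 : 0 < s := by rw [hsdef]; exact Real.sqrt_pos.2 hε
  have hs2 : s^2 = ε := by rw [hsdef]; exact Real.sq_sqrt hε.le
  have hs10 : s < 1/10 := by nlinarith
  have hεs : 0 < ε * s := mul_pos hε hs0
  have hεs1 : ε * s < 1/1000 := by nlinarith
  obtain ⟨a, hadef⟩ : ∃ x : ℝ, x = Real.sqrt (1+ε*s) := ⟨_, rfl⟩
  have ha2 : a^2 = 1 + ε*s := by rw [hadef]; exact Real.sq_sqrt (by linarith)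
  have ha0 : 0 ≤ a := by rw [hadef]; exact Real.sqrt_nonneg _
  have ha1 : 1 ≤ a := by nlinarith
  have hane : a ≠ 0 := by intro h; rw [h] at ha1; linarith
  obtain ⟨b, hbdef⟩ : ∃ x : ℝ, x = Real.sqrt (1-ε*s) := ⟨_, rfl⟩
  have hb2 : b^2 = 1 - ε*s := by rw [hbdef]; exact Real.sq_sqrt (by linarith)
  have hb0 : 0 ≤ b := by rw [hbdef]; exact Real.sqrt_nonneg _
  have hb9 : 9/10 ≤ b := by nlinarith
  have hbne : b ≠ 0 := by intro h; rw [h] at hb9; linarith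
  obtain ⟨xm, hxm, xp, hxp, hqm, hqp, huniq⟩ := qf_roots hε hε1
  have hε3p : 0 < ε^3 := by positivity
  obtain ⟨hxm1, hxm2⟩ := hxm
  obtain ⟨hxp1, hxp2⟩ := hxp
  have hxp1' : 1 < xp := by linarith
  obtain ⟨zm, hzmdef⟩ : ∃ x : ℝ, x = (xm^2 - 1)/ε := ⟨_, rfl⟩
  obtain ⟨zp, hzpdef⟩ : ∃ x : ℝ, x = (xp^2 - 1)/ε := ⟨_, rfl⟩
  have hezm : ε * zm = xm^2 - 1 := by rw [hzmdef]; field_simp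
  have hezp : ε * zp = xp^2 - 1 := by rw [hzpdef]; field_simp
  have hqm' : (xm^2-1)^2 = ε^3*(1+2*xm) := by
    have h := hqm; unfold qf at h; linarith
  have hqp' : (xp^2-1)^2 = ε^3*(1+2*xp) := by
    have h := hqp; unfold qf at h; linarith
  have hzm2 : zm^2 = ε*(1+2*xm) :=
    mul_left_cancel₀ (pow_ne_zero 2 hεne)
      (by linear_combination (ε*zm + xm^2 - 1)*hezm + hqm')
  have hzp2 : zp^2 = ε*(1+2*xp) :=
    mul_left_cancel₀ (pow_ne_zero 2 hεne)
      (by linear_combination (ε*zp + xp^2 - 1)*hezp + hqp')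
  have hzm_neg : zm < 0 := by
    rw [hzmdef]
    exact div_neg_of_neg_of_pos
      (by have := sq_lt_one_of (by linarith : (0:ℝ) ≤ xm) hxm2; linarith) hε
  have hzp_pos : 0 < zp := by
    rw [hzpdef]
    exact div_pos (by have := one_lt_sq_of hxp1'; linarith) hε
  have hεxm : ε * xm ≤ 11/1000 := by
    have := mul_le_mul hε1.le (by linarith : xm ≤ 11/10)
      (by linarith : (0:ℝ) ≤ xm) (by norm_num : (0:ℝ) ≤ 1/100)
    linarith
  have hεxp : ε * xp ≤ 11/1000 := by
    have := mul_le_mul hε1.le (by linarith : xp ≤ 11/10)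
      (by linarith : (0:ℝ) ≤ xp) (by norm_num : (0:ℝ) ≤ 1/100)
    linarith
  have hεxm0 : 0 ≤ ε * xm := mul_nonneg hε.le (by linarith)
  have hεxp0 : 0 ≤ ε * xp := mul_nonneg hε.le (by linarith)
  have hzm2' : zm^2 = ε + 2*(ε*xm) := by linear_combination hzm2
  have hzp2' : zp^2 = ε + 2*(ε*xp) := by linear_combination hzp2
  have hzm_le : zm ≤ -s := le_neg_of_sq hs0 hzm_neg (by linarith)
  have hzp_ge : s ≤ zp := ge_of_sq hs0 hzp_pos (by linarith)
  have hzm_ge : -(1/5) ≤ zm := ge_neg_of_sq (by norm_num : (0:ℝ) < 1/5)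
    (by rw [hzm2']; norm_num; linarith)
  have hzp_le : zp ≤ 1/5 := le_of_sq (by norm_num : (0:ℝ) < 1/5)
    (by rw [hzp2']; norm_num; linarith)
  -- critical points
  have hc1 : IsCriticalPt3 (fSix ε) ![a, -a, s] := crit_typeA hs2 ha2
  have hc2 : IsCriticalPt3 (fSix ε) ![-a, a, s] := by
    simpa only [neg_neg] using crit_typeA (c := -a) hs2 (by linear_combination ha2)
  have hc3 : IsCriticalPt3 (fSix ε) ![b, -b, -s] :=
    crit_typeA (s := -s) (by linear_combination hs2) (by linear_combination hb2)
  have hc4 : IsCriticalPt3 (fSix ε) ![-b, b, -s] := by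
    simpa only [neg_neg] using crit_typeA (s := -s) (c := -b)
      (by linear_combination hs2) (by linear_combination hb2)
  have hc5 : IsCriticalPt3 (fSix ε) ![xm, xm, zm] := crit_typeB hεne hezm hzm2
  have hc6 : IsCriticalPt3 (fSix ε) ![xp, xp, zp] := crit_typeB hεne hezp hzp2
  -- Morse data
  have hm1 := morse_typeA_pos (ε := ε) hs0 hane
  have hm2 : morseIndex3 (fSix ε) ![-a, a, s] = 1 ∧
      (hess3 (fSix ε) ![-a, a, s]).det ≠ 0 := by
    simpa only [neg_neg] using morse_typeA_pos (ε := ε) hs0 (neg_ne_zero.2 hane)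
  have hm3 := morse_typeA_neg (ε := ε) (s := -s) (by linarith) hbne
  have hm4 : morseIndex3 (fSix ε) ![-b, b, -s] = 2 ∧
      (hess3 (fSix ε) ![-b, b, -s]).det ≠ 0 := by
    simpa only [neg_neg] using morse_typeA_neg (ε := ε) (s := -s) (by linarith)
      (neg_ne_zero.2 hbne)
  have e0 : (![xm, xm, zm] : Fin 3 → ℝ) 0 = xm := rfl
  have e1 : (![xm, xm, zm] : Fin 3 → ℝ) 1 = xm := rfl
  have e2 : (![xm, xm, zm] : Fin 3 → ℝ) 2 = zm := rfl
  have hdet5 : (hess3 (fSix ε) ![xm, xm, zm]).det < 0 := by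
    rw [hess3_det, e0, e1, e2]
    have t1 : xm * xm * zm < 0 :=
      mul_neg_of_pos_of_neg (mul_pos (by linarith) (by linarith)) hzm_neg
    have t2 : 0 < ε^2 * (xm + xm) := mul_pos (pow_pos hε 2) (by linarith)
    linarith
  have htr5 : 0 < (hess3 (fSix ε) ![xm, xm, zm]).trace := by
    rw [hess3_trace, e0, e1, e2]; linarith
  have hm5 : morseIndex3 (fSix ε) ![xm, xm, zm] = 1 := morse_eq_one hdet5 htr5
  have hpd6 : (hess3 (fSix ε) ![xp, xp, zp]).PosDef :=
    hess3_posdef hs0 hs2 (by linarith) (by show (9/10:ℝ) ≤ xp; linarith)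
      (by show (9/10:ℝ) ≤ xp; linarith) (by show s ≤ zp; exact hzp_ge)
  have hm6 : morseIndex3 (fSix ε) ![xp, xp, zp] = 0 := morse_eq_zero hpd6
  have hdet6 : (hess3 (fSix ε) ![xp, xp, zp]).det ≠ 0 := hpd6.det_pos.ne'
  -- the critical set
  have hS : {p : Fin 3 → ℝ | IsCriticalPt3 (fSix ε) p} =
      {![a,-a,s], ![-a,a,s], ![b,-b,-s], ![-b,b,-s], ![xm,xm,zm], ![xp,xp,zp]} := by
    ext p
    simp only [Set.mem_setOf_eq, Set.mem_insert_iff, Set.mem_singleton_iff]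
    constructor
    · intro h
      rw [crit_iff] at h
      obtain ⟨h0, h1, h2⟩ := h
      have hfun : p = ![p 0, p 1, p 2] := by
        funext i; fin_cases i <;> rfl
      have hxy : (p 1 - p 0) * (p 1 + p 0) = 0 := by linear_combination h1 - h0
      rcases mul_eq_zero.1 hxy with hy | hy
      · have hy' : p 1 = p 0 := by linarith
        have hez : ε * p 2 = (p 0)^2 - 1 := by linarith
        have hq : qf ε (p 0) = 0 := by
          unfold qf
          linear_combination (-(ε*p 2 + p 0^2 - 1)) * hez + ε^2 * h2 + ε^3 * hy'
        rcases huniq _ hq with h5 | h5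
        · right; right; right; right; left
          have hz : p 2 = zm := by
            apply mul_left_cancel₀ hεne
            rw [hez, h5, hezm]
          rw [hfun, hy', h5, hz]
        · right; right; right; right; right
          have hz : p 2 = zp := by
            apply mul_left_cancel₀ hεne
            rw [hez, h5, hezp]
          rw [hfun, hy', h5, hz]
      · have hy' : p 1 = -p 0 := by linarith
        have hz2 : (p 2)^2 = ε := by linear_combination h2 + ε * hy'
        have hzz : (p 2 - s) * (p 2 + s) = 0 := by linear_combination hz2 - hs2
        rcases mul_eq_zero.1 hzz with hz | hz
        · have hz' : p 2 = s := by linarith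
          have hx2 : (p 0)^2 = a^2 := by linear_combination h0 + ε*hz' - ha2
          have hfac : (p 0 - a)*(p 0 + a) = 0 := by linear_combination hx2
          rcases mul_eq_zero.1 hfac with hx | hx
          · left
            rw [hfun, hy', hz', show p 0 = a by linarith]
          · right; left
            rw [hfun, hy', hz', show p 0 = -a by linarith, neg_neg]
        · have hz' : p 2 = -s := by linarith
          have hx2 : (p 0)^2 = b^2 := by linear_combination h0 + ε*hz' - hb2
          have hfac : (p 0 - b)*(p 0 + b) = 0 := by linear_combination hx2
          rcases mul_eq_zero.1 hfac with hx | hx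
          · right; right; left
            rw [hfun, hy', hz', show p 0 = b by linarith]
          · right; right; right; left
            rw [hfun, hy', hz', show p 0 = -b by linarith, neg_neg]
    · intro h
      rcases h with rfl|rfl|rfl|rfl|rfl|rfl
      exacts [hc1, hc2, hc3, hc4, hc5, hc6]
  -- distinctness
  have vne : ∀ {u v : Fin 3 → ℝ} (i : Fin 3), u i ≠ v i → u ≠ v :=
    fun i h hq => h (by rw [hq])
  have hne12 : (![a,-a,s] : Fin 3 → ℝ) ≠ ![-a,a,s] :=
    vne 0 (by show a ≠ -a; intro h; linarith)
  have hne13 : (![a,-a,s] : Fin 3 → ℝ) ≠ ![b,-b,-s] :=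
    vne 2 (by show s ≠ -s; intro h; linarith)
  have hne14 : (![a,-a,s] : Fin 3 → ℝ) ≠ ![-b,b,-s] :=
    vne 2 (by show s ≠ -s; intro h; linarith)
  have hne15 : (![a,-a,s] : Fin 3 → ℝ) ≠ ![xm,xm,zm] :=
    vne 2 (by show s ≠ zm; intro h; linarith)
  have hne16 : (![a,-a,s] : Fin 3 → ℝ) ≠ ![xp,xp,zp] :=
    vne 1 (by show -a ≠ xp; intro h; linarith)
  have hne23 : (![-a,a,s] : Fin 3 → ℝ) ≠ ![b,-b,-s] :=
    vne 2 (by show s ≠ -s; intro h; linarith)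
  have hne24 : (![-a,a,s] : Fin 3 → ℝ) ≠ ![-b,b,-s] :=
    vne 2 (by show s ≠ -s; intro h; linarith)
  have hne25 : (![-a,a,s] : Fin 3 → ℝ) ≠ ![xm,xm,zm] :=
    vne 2 (by show s ≠ zm; intro h; linarith)
  have hne26 : (![-a,a,s] : Fin 3 → ℝ) ≠ ![xp,xp,zp] :=
    vne 0 (by show -a ≠ xp; intro h; linarith)
  have hne34 : (![b,-b,-s] : Fin 3 → ℝ) ≠ ![-b,b,-s] :=
    vne 0 (by show b ≠ -b; intro h; linarith)
  have hne35 : (![b,-b,-s] : Fin 3 → ℝ) ≠ ![xm,xm,zm] :=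
    vne 1 (by show -b ≠ xm; intro h; linarith)
  have hne36 : (![b,-b,-s] : Fin 3 → ℝ) ≠ ![xp,xp,zp] :=
    vne 2 (by show -s ≠ zp; intro h; linarith)
  have hne45 : (![-b,b,-s] : Fin 3 → ℝ) ≠ ![xm,xm,zm] :=
    vne 0 (by show -b ≠ xm; intro h; linarith)
  have hne46 : (![-b,b,-s] : Fin 3 → ℝ) ≠ ![xp,xp,zp] :=
    vne 2 (by show -s ≠ zp; intro h; linarith)
  have hne56 : (![xm,xm,zm] : Fin 3 → ℝ) ≠ ![xp,xp,zp] :=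
    vne 2 (by show zm ≠ zp; intro h; linarith)
  -- index sets
  have hmemS : ∀ p : Fin 3 → ℝ, IsCriticalPt3 (fSix ε) p →
      p = ![a,-a,s] ∨ p = ![-a,a,s] ∨ p = ![b,-b,-s] ∨ p = ![-b,b,-s] ∨
        p = ![xm,xm,zm] ∨ p = ![xp,xp,zp] := by
    intro p hp
    have : p ∈ ({![a,-a,s], ![-a,a,s], ![b,-b,-s], ![-b,b,-s], ![xm,xm,zm], ![xp,xp,zp]}
        : Set (Fin 3 → ℝ)) := by rw [← hS]; exact hp
    simpa only [Set.mem_insert_iff, Set.mem_singleton_iff] using this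
  have hI0 : {p : Fin 3 → ℝ | IsCriticalPt3 (fSix ε) p ∧ morseIndex3 (fSix ε) p = 0} =
      {![xp,xp,zp]} := by
    ext p
    simp only [Set.mem_setOf_eq, Set.mem_singleton_iff]
    constructor
    · rintro ⟨hcp, hmp⟩
      rcases hmemS p hcp with rfl|rfl|rfl|rfl|rfl|rfl
      · exact absurd (hm1.1.symm.trans hmp) (by norm_num)
      · exact absurd (hm2.1.symm.trans hmp) (by norm_num)
      · exact absurd (hm3.1.symm.trans hmp) (by norm_num)
      · exact absurd (hm4.1.symm.trans hmp) (by norm_num)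
      · exact absurd (hm5.symm.trans hmp) (by norm_num)
      · rfl
    · rintro rfl; exact ⟨hc6, hm6⟩
  have hI1 : {p : Fin 3 → ℝ | IsCriticalPt3 (fSix ε) p ∧ morseIndex3 (fSix ε) p = 1} =
      {![a,-a,s], ![-a,a,s], ![xm,xm,zm]} := by
    ext p
    simp only [Set.mem_setOf_eq, Set.mem_insert_iff, Set.mem_singleton_iff]
    constructor
    · rintro ⟨hcp, hmp⟩
      rcases hmemS p hcp with rfl|rfl|rfl|rfl|rfl|rfl
      · exact Or.inl rfl
      · exact Or.inr (Or.inl rfl)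
      · exact absurd (hm3.1.symm.trans hmp) (by norm_num)
      · exact absurd (hm4.1.symm.trans hmp) (by norm_num)
      · exact Or.inr (Or.inr rfl)
      · exact absurd (hm6.symm.trans hmp) (by norm_num)
    · rintro (rfl|rfl|rfl)
      exacts [⟨hc1, hm1.1⟩, ⟨hc2, hm2.1⟩, ⟨hc5, hm5⟩]
  have hI2 : {p : Fin 3 → ℝ | IsCriticalPt3 (fSix ε) p ∧ morseIndex3 (fSix ε) p = 2} =
      {![b,-b,-s], ![-b,b,-s]} := by
    ext p
    simp only [Set.mem_setOf_eq, Set.mem_insert_iff, Set.mem_singleton_iff]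
    constructor
    · rintro ⟨hcp, hmp⟩
      rcases hmemS p hcp with rfl|rfl|rfl|rfl|rfl|rfl
      · exact absurd (hm1.1.symm.trans hmp) (by norm_num)
      · exact absurd (hm2.1.symm.trans hmp) (by norm_num)
      · exact Or.inl rfl
      · exact Or.inr rfl
      · exact absurd (hm5.symm.trans hmp) (by norm_num)
      · exact absurd (hm6.symm.trans hmp) (by norm_num)
    · rintro (rfl|rfl)
      exacts [⟨hc3, hm3.1⟩, ⟨hc4, hm4.1⟩]
  refine ⟨?_, ?_, ?_, ?_, ?_, ?_⟩
  · rw [hS,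
      Set.ncard_insert_of_notMem (by
        simp only [Set.mem_insert_iff, Set.mem_singleton_iff]
        push_neg
        exact ⟨hne12, hne13, hne14, hne15, hne16⟩) (Set.toFinite _),
      Set.ncard_insert_of_notMem (by
        simp only [Set.mem_insert_iff, Set.mem_singleton_iff]
        push_neg
        exact ⟨hne23, hne24, hne25, hne26⟩) (Set.toFinite _),
      Set.ncard_insert_of_notMem (by
        simp only [Set.mem_insert_iff, Set.mem_singleton_iff]
        push_neg
        exact ⟨hne34, hne35, hne36⟩) (Set.toFinite _),
      Set.ncard_insert_of_notMem (by
        simp only [Set.mem_insert_iff, Set.mem_singleton_iff]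
        push_neg
        exact ⟨hne45, hne46⟩) (Set.toFinite _),
      Set.ncard_insert_of_notMem (by simpa using hne56) (Set.toFinite _),
      Set.ncard_singleton]
  · intro p hp
    rcases hmemS p hp with rfl|rfl|rfl|rfl|rfl|rfl
    exacts [hm1.2, hm2.2, hm3.2, hm4.2, hdet5.ne, hdet6]
  · rw [hI0, Set.ncard_singleton]
  · rw [hI1,
      Set.ncard_insert_of_notMem (by
        simp only [Set.mem_insert_iff, Set.mem_singleton_iff]
        push_neg
        exact ⟨hne12, hne15⟩) (Set.toFinite _),
      Set.ncard_insert_of_notMem (by simpa using hne25) (Set.toFinite _),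
      Set.ncard_singleton]
  · rw [hI2, Set.ncard_pair hne34]
  · ext p
    simp only [Set.mem_setOf_eq, Set.mem_empty_iff_false, iff_false, not_and]
    intro hcp
    rcases hmemS p hcp with rfl|rfl|rfl|rfl|rfl|rfl <;>
      simp [hm1.1, hm2.1, hm3.1, hm4.1, hm5, hm6]
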